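/- Let L be a finite slim lattice and let a, b ∈ L be incomparable with c = a∧b. If d ∈ [c,a] and e ∈ [c,a], then d and e are comparable; moreover d ∧ e and d ∨ e both lie in [c,a]. -/

import Mathlib

/-!
Suppose `d, e ∈ [c, a]` are incomparable. Choose join-irreducibles `p ≤ d` with `p ≰ e`,
`q ≤ e` with `q ≰ d`, and `r ≤ b` with `r ≰ a`. Neither `p` nor `q` lies below `b`, since
otherwise it would lie below `a ⊓ b = c`, which is below both `d` and `e`. Hence no two of
`p, q, r` are comparable, yet two of them lie in the same of the two chains covering the
join-irreducibles.
-/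

theorem exists_supIrred_le_not_le {α : Type*} [SemilatticeSup α] [OrderBot α]
    [WellFoundedLT α] {x y : α} (h : ¬ x ≤ y) : ∃ p, SupIrred p ∧ p ≤ x ∧ ¬ p ≤ y := by
  obtain ⟨s, rfl, hs⟩ := exists_supIrred_decomposition x
  obtain ⟨p, hp, hpy⟩ := not_forall₂.1 (mt Finset.sup_le_iff.2 h)
  exact ⟨p, hs hp, Finset.le_sup (f := id) hp, hpy⟩

theorem le_or_le_of_mem_union_chains {α : Type*} [Preorder α] {U V : Set α}
    (hU : IsChain (· ≤ ·) U) (hV : IsChain (· ≤ ·) V) {x y z : α}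
    (hx : x ∈ U ∪ V) (hy : y ∈ U ∪ V) (hz : z ∈ U ∪ V) :
    (x ≤ y ∨ y ≤ x) ∨ (x ≤ z ∨ z ≤ x) ∨ (y ≤ z ∨ z ≤ y) := by
  rcases hx with hx | hx <;> rcases hy with hy | hy <;> rcases hz with hz | hz
  all_goals first
    | exact .inl (hU.total hx hy) | exact .inl (hV.total hx hy)
    | exact .inr (.inl (hU.total hx hz)) | exact .inr (.inl (hV.total hx hz))
    | exact .inr (.inr (hU.total hy hz)) | exact .inr (.inr (hV.total hy hz))

theorem stmt_15_general {L : Type*} [Lattice L] [Fintype L] [OrderBot L] (U V : Set L)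
    (hU : IsChain (· ≤ ·) U) (hV : IsChain (· ≤ ·) V)
    (hJ : {a : L | SupIrred a} = U ∪ V)
    (a b : L) (hba : ¬ b ≤ a) (c : L) (hc : c = a ⊓ b)
    (d e : L) (hd : d ∈ Set.Icc c a) (he : e ∈ Set.Icc c a) :
    (d ≤ e ∨ e ≤ d) ∧ d ⊓ e ∈ Set.Icc c a ∧ d ⊔ e ∈ Set.Icc c a := by
  subst hc
  refine ⟨?_, ⟨le_inf hd.1 he.1, inf_le_left.trans hd.2⟩,
    ⟨hd.1.trans le_sup_left, sup_le hd.2 he.2⟩⟩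
  by_contra! ⟨hde, hed⟩
  obtain ⟨p, hp, hpd, hpe⟩ := exists_supIrred_le_not_le hde
  obtain ⟨q, hq, hqe, hqd⟩ := exists_supIrred_le_not_le hed
  obtain ⟨r, hr, hrb, hra⟩ := exists_supIrred_le_not_le hba
  have hpb : ¬ p ≤ b := fun h => hpe ((le_inf (hpd.trans hd.2) h).trans he.1)
  have hqb : ¬ q ≤ b := fun h => hqd ((le_inf (hqe.trans he.2) h).trans hd.1)
  have hmem : ∀ {x : L}, SupIrred x → x ∈ U ∪ V := fun hx => hJ ▸ hx
  rcases le_or_le_of_mem_union_chains hU hV (hmem hp) (hmem hq) (hmem hr) with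
    h | h | h <;> rcases h with h | h
  · exact hpe (h.trans hqe)
  · exact hqd (h.trans hpd)
  · exact hpb (h.trans hrb)
  · exact hra (h.trans (hpd.trans hd.2))
  · exact hqb (h.trans hrb)
  · exact hra (h.trans (hqe.trans he.2))

/-- In a finite slim lattice, for incomparable `a`, `b` with `c = a ⊓ b`, any two elements
of the interval `[c, a]` are comparable, and their meet and join lie in `[c, a]`. -/
theorem stmt_15 {L : Type*} [Lattice L] [Fintype L] [OrderBot L] (U V : Set L)
    (hU : IsChain (· ≤ ·) U) (hV : IsChain (· ≤ ·) V)
    (hJ : {a : L | SupIrred a} = U ∪ V)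
    (a b : L) (hab : ¬ a ≤ b) (hba : ¬ b ≤ a) (c : L) (hc : c = a ⊓ b)
    (d e : L) (hd : d ∈ Set.Icc c a) (he : e ∈ Set.Icc c a) :
    (d ≤ e ∨ e ≤ d) ∧ d ⊓ e ∈ Set.Icc c a ∧ d ⊔ e ∈ Set.Icc c a :=
  stmt_15_general U V hU hV hJ a b hba c hc d e hd he
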